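/- Let V: ℝ₊ⁿ → ℝ₊ be a function that is multiplicatively convex in each coordinate separately, and suppose moreover that V satisfies the following closure property: for every index k, every real λ, and every substitution of the form (t₁,…,t_k) ↦ (t₁,…,t_{k-1}, t₁^λ t_k), the resulting function is again multiplicatively convex in its first k−1 coordinates whenever V is (jointly) multiplicatively convex in its first k−1 coordinates after any such reparametrization. Then, as shown by the inductive argument: if F(s₁,…,s_n) := log V(e^{s₁},…,e^{s_n}) is convex in each variable and convex along all reparametrized (k−1)-dimensional coordinate subspaces obtained by the substitutions s_k ↦ λ s₁ + s_k, then F is jointly convex on ℝⁿ. -/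

import Mathlib

/-!
On an affine hyperplane `s_k = λ s₁ + c`, with `k` the last coordinate, the substitution
`s_k ↦ λ s₁ + s_k` identifies `F` with a function of the first `k` coordinates, which is convex
by hypothesis. Any two points with distinct first coordinates lie on such a hyperplane, so `F`
is convex along the segment joining them. Two points with equal first coordinates are pushed
apart along the first axis, in opposite directions and keeping the convex combination fixed;
since `F` is convex, hence continuous, in the first variable, the inequality survives the limit.
-/

/-- `F` is (jointly) convex in the first `k` coordinates, the remaining
coordinates being fixed arbitrarily. -/
def ConvexInFirst (n : ℕ) (k : ℕ) (F : (Fin n → ℝ) → ℝ) : Prop :=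
  ∀ c : Fin n → ℝ, ConvexOn ℝ Set.univ
    (fun s : Fin n → ℝ => F (fun i => if (i : ℕ) < k then s i else c i))

/-- The reparametrization `s ↦ s` with `s_k` replaced by `λ·s₁ + s_k`. -/
def subst (n : ℕ) (hn : 0 < n) (k : Fin n) (lam : ℝ) (s : Fin n → ℝ) : Fin n → ℝ :=
  Function.update s k (lam * s ⟨0, hn⟩ + s k)

open Set Filter Topology

theorem convexOn_univ_of_continuous_of_transversal {E : Type*} [AddCommGroup E] [Module ℝ E]
    {F : E → ℝ} (φ : E →ₗ[ℝ] ℝ) {v : E} (hv : φ v ≠ 0)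
    (hline : ∀ x, Continuous fun r : ℝ => F (x + r • v))
    (htransversal : ∀ a b, φ a ≠ φ b → ∃ S, ConvexOn ℝ S F ∧ a ∈ S ∧ b ∈ S) :
    ConvexOn ℝ univ F := by
  refine ⟨convex_univ, fun a _ b _ t s ht hs hts => ?_⟩
  simp only [smul_eq_mul]
  by_cases hab : φ a = φ b
  swap
  · obtain ⟨S, hS, haS, hbS⟩ := htransversal a b hab
    simpa only [smul_eq_mul] using hS.2 haS hbS ht hs hts
  let bound : ℝ → ℝ := fun ε => t * F (a + (s * ε) • v) + s * F (b + (-(t * ε)) • v)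
  have hbound : Continuous bound :=
    (continuous_const.mul ((hline a).comp (continuous_const.mul continuous_id))).add
      (continuous_const.mul ((hline b).comp (continuous_const.mul continuous_id).neg))
  have hle : ∀ ε ≠ 0, F (t • a + s • b) ≤ bound ε := by
    intro ε hε
    have hφ : φ (a + (s * ε) • v) ≠ φ (b + (-(t * ε)) • v) := by
      intro h
      simp only [map_add, map_smul, smul_eq_mul, hab] at h
      have : ε * φ v = 0 := by linear_combination h - ε * φ v * hts
      simp_all
    obtain ⟨S, hS, haS, hbS⟩ := htransversal _ _ hφ
    have hcomb : t • (a + (s * ε) • v) + s • (b + (-(t * ε)) • v) = t • a + s • b := by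
      simp only [smul_add, smul_smul]
      rw [add_add_add_comm, ← add_smul]
      ring_nf
      simp
    simpa only [hcomb, smul_eq_mul] using hS.2 haS hbS ht hs hts
  have hlim : Tendsto bound (𝓝[≠] 0) (𝓝 (t * F a + s * F b)) := by
    simpa [bound] using (hbound.tendsto 0).mono_left nhdsWithin_le_nhds
  exact ge_of_tendsto hlim (eventually_nhdsWithin_of_forall hle)

theorem convexOn_univ_of_subsingleton {ι : Type*} [Subsingleton ι] [DecidableEq ι] (i : ι)
    {F : (ι → ℝ) → ℝ} (h : ConvexOn ℝ univ fun r : ℝ => F (Function.update 0 i r)) :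
    ConvexOn ℝ univ F := by
  have hF : F = (fun r : ℝ => F (Function.update 0 i r)) ∘ fun x => x i := by
    funext x
    congr 1
    funext j
    obtain rfl := Subsingleton.elim j i
    simp
  rw [hF]
  exact h.comp_linearMap (LinearMap.proj (R := ℝ) (φ := fun _ : ι => ℝ) i)

theorem subst_ite_eq_self {n : ℕ} (hn : 0 < n) {k : Fin n} (hk0 : 0 < (k : ℕ))
    (hk : ∀ i : Fin n, (i : ℕ) ≤ k) {lam c : ℝ} {x : Fin n → ℝ}
    (hx : x k = lam * x ⟨0, hn⟩ + c) :
    subst n hn k lam (fun i => if (i : ℕ) < k then x i else c) = x := by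
  funext i
  rcases eq_or_ne i k with rfl | hik
  · simp [subst, hk0, hx]
  · have : (i : ℕ) < k := lt_of_le_of_ne (hk i) (Fin.val_ne_of_ne hik)
    simp only [subst, Function.update_of_ne hik, if_pos this]

theorem ConvexInFirst.convexOn_setOf_eq {n : ℕ} (hn : 0 < n) {F : (Fin n → ℝ) → ℝ}
    {k : Fin n} (hk0 : 0 < (k : ℕ)) (hk : ∀ i : Fin n, (i : ℕ) ≤ k) {lam : ℝ}
    (h : ConvexInFirst n k fun s => F (subst n hn k lam s)) (c : ℝ) :
    ConvexOn ℝ {x | x k = lam * x ⟨0, hn⟩ + c} F := by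
  have hconvex : Convex ℝ {x : Fin n → ℝ | x k = lam * x ⟨0, hn⟩ + c} := by
    intro x hx y hy a b _ _ hab
    simp only [mem_ofPred_eq, Pi.add_apply, Pi.smul_apply, smul_eq_mul] at hx hy ⊢
    linear_combination a * hx + b * hy + c * hab
  refine ⟨hconvex, fun x hx y hy a b ha hb hab => ?_⟩
  have hxy := hconvex hx hy ha hb hab
  simpa only [subst_ite_eq_self hn hk0 hk hx, subst_ite_eq_self hn hk0 hk hy,
    subst_ite_eq_self hn hk0 hk hxy] using
    (h fun _ => c).2 (mem_univ x) (mem_univ y) ha hb hab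

/-- induction step for joint multiplicative convexity. If
`F(s₁,…,s_n) = log V(e^{s₁},…,e^{s_n})` is convex in each variable and convex in
its first `k-1` coordinates after every substitution `s_k ↦ λ s₁ + s_k`, then `F`
is jointly convex on `ℝⁿ`. -/
theorem stmt_6 (n : ℕ) (hn : 0 < n) (F : (Fin n → ℝ) → ℝ)
    (h1 : ∀ (i : Fin n) (c : Fin n → ℝ),
      ConvexOn ℝ Set.univ (fun x : ℝ => F (Function.update c i x)))
    (h2 : ∀ (k : Fin n) (lam : ℝ),
      ConvexInFirst n k (fun s => F (subst n hn k lam s))) :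
    ConvexOn ℝ Set.univ F := by
  set z : Fin n := ⟨0, hn⟩
  obtain hn1 | hn2 := Nat.lt_or_ge n 2
  · have : Subsingleton (Fin n) := Fin.subsingleton_iff_le_one.2 (by omega)
    exact convexOn_univ_of_subsingleton z (h1 z 0)
  set k : Fin n := ⟨n - 1, by omega⟩
  have hk0 : 0 < (k : ℕ) := by simp only [k]; omega
  have hk : ∀ i : Fin n, (i : ℕ) ≤ k := fun i => by simp only [k]; omega
  refine convexOn_univ_of_continuous_of_transversal (LinearMap.proj z) (v := Pi.single z 1)
    (by simp) (fun x => ?_) (fun a b hab => ?_)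
  · have hupdate : ∀ r : ℝ, x + r • Pi.single z 1 = Function.update x z (x z + r) := by
      intro r
      funext j
      rcases eq_or_ne j z with rfl | hj <;> simp [*]
    simp only [hupdate]
    exact ((h1 z x).continuousOn isOpen_univ).comp_continuous (continuous_const.add continuous_id)
      fun _ => mem_univ _
  · set lam := (b k - a k) / (b z - a z)
    refine ⟨_, (h2 k lam).convexOn_setOf_eq hn hk0 hk (a k - lam * a z), by simp [z], ?_⟩
    have : b z - a z ≠ 0 := sub_ne_zero.2 (Ne.symm hab)
    simp only [mem_ofPred_eq, lam]
    field_simp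
    ring
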